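/- arXiv:2107.12122 — 6 statements merged into one kernel-verified Lean document; each statement's English description precedes it below -/
import Mathlib

section
/- If A ⊆ R^m is nonempty and compact and K is a closed, convex, pointed cone, then the set Min(A,K) := {y ∈ A : (y − K) ∩ A = {y}} is nonempty and A + K = Min(A,K) + K (the domination property). -/
open Set Pointwise Topology

/-- domination property. If `A` is nonempty compact and `K` is a closed convex
pointed cone, then `Min(A,K) = {y ∈ A : (y - K) ∩ A = {y}}` is nonempty and
`A + K = Min(A,K) + K`. -/
theorem domination_property {m : ℕ} (K A : Set (EuclideanSpace ℝ (Fin m)))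
    (hcone : ∀ y ∈ K, ∀ t : ℝ, 0 ≤ t → t • y ∈ K)
    (hclosed : IsClosed K) (hconv : Convex ℝ K)
    (hpointed : K ∩ (-K) = {0})
    (hA : A.Nonempty) (hAcomp : IsCompact A) :
    {y | y ∈ A ∧ {z | z ∈ A ∧ y - z ∈ K} = {y}}.Nonempty ∧
    A + K = {y | y ∈ A ∧ {z | z ∈ A ∧ y - z ∈ K} = {y}} + K := by
  classical
  have h0 : (0 : EuclideanSpace ℝ (Fin m)) ∈ K := by
    have : (0 : EuclideanSpace ℝ (Fin m)) ∈ K ∩ (-K) := by rw [hpointed]; exact rfl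
    exact this.1
  have hKadd : ∀ u ∈ K, ∀ v ∈ K, u + v ∈ K := by
    intro u hu v hv
    have hmid : (1/2 : ℝ) • u + (1/2 : ℝ) • v ∈ K :=
      hconv hu hv (by norm_num : (0:ℝ) ≤ 1/2) (by norm_num : (0:ℝ) ≤ 1/2) (by norm_num)
    have h2 : (2 : ℝ) • ((1/2 : ℝ) • u + (1/2 : ℝ) • v) ∈ K :=
      hcone _ hmid 2 (by norm_num)
    have heq : (2 : ℝ) • ((1/2 : ℝ) • u + (1/2 : ℝ) • v) = u + v := by
      rw [smul_add, smul_smul, smul_smul]; norm_num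
    rwa [heq] at h2
  have hanti : ∀ u : EuclideanSpace ℝ (Fin m), u ∈ K → -u ∈ K → u = 0 := by
    intro u hu hnu
    have hmem : u ∈ K ∩ (-K) := ⟨hu, by simpa using hnu⟩
    rw [hpointed] at hmem
    exact hmem
  set S : EuclideanSpace ℝ (Fin m) → Set (EuclideanSpace ℝ (Fin m)) :=
    fun x => {z | z ∈ A ∧ x - z ∈ K} with hS
  have hSsubA : ∀ x, S x ⊆ A := fun x z hz => hz.1
  have hSclosed : ∀ x, IsClosed (S x) := by
    intro x
    have : S x = A ∩ (fun z => x - z) ⁻¹' K := rfl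
    rw [this]
    exact hAcomp.isClosed.inter (hclosed.preimage (continuous_const.sub continuous_id))
  have hScomp : ∀ x, IsCompact (S x) :=
    fun x => IsCompact.of_isClosed_subset hAcomp (hSclosed x) (hSsubA x)
  have hSmem : ∀ x ∈ A, x ∈ S x := by
    intro x hx; exact ⟨hx, by simpa using h0⟩
  have hStrans : ∀ x z w : EuclideanSpace ℝ (Fin m), z ∈ S x → w ∈ S z → w ∈ S x := by
    intro x z w hz hw
    refine ⟨hw.1, ?_⟩
    have := hKadd _ hz.2 _ hw.2
    simpa [sub_add_sub_cancel] using this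
  have key : ∀ a ∈ A, ∃ y, y ∈ S a ∧ S y = {y} := by
    intro a ha
    set F : Set (Set (EuclideanSpace ℝ (Fin m))) := {T | ∃ x ∈ S a, T = S x} with hF
    have hzorn : ∀ c ⊆ F, IsChain (· ⊆ ·) c → c.Nonempty → ∃ lb ∈ F, ∀ s ∈ c, lb ⊆ s := by
      intro c hcF hchain hcne
      have hne : Nonempty c := hcne.to_subtype
      have hdir : Directed (· ⊇ ·) (fun i : c => (i : Set (EuclideanSpace ℝ (Fin m)))) := by
        intro i j
        rcases eq_or_ne (i : Set (EuclideanSpace ℝ (Fin m))) (j : Set (EuclideanSpace ℝ (Fin m)))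
          with h | h
        · exact ⟨i, subset_rfl, h.subset⟩
        · rcases hchain i.2 j.2 h with h' | h'
          · exact ⟨i, subset_rfl, h'⟩
          · exact ⟨j, h', subset_rfl⟩
      have htn : ∀ i : c, (i : Set (EuclideanSpace ℝ (Fin m))).Nonempty := by
        intro i
        obtain ⟨x, hx, hxe⟩ := hcF i.2
        exact ⟨x, hxe ▸ hSmem x (hSsubA a hx)⟩
      have htc : ∀ i : c, IsCompact (i : Set (EuclideanSpace ℝ (Fin m))) := by
        intro i; obtain ⟨x, _, hxe⟩ := hcF i.2; exact hxe ▸ hScomp x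
      have htcl : ∀ i : c, IsClosed (i : Set (EuclideanSpace ℝ (Fin m))) := by
        intro i; obtain ⟨x, _, hxe⟩ := hcF i.2; exact hxe ▸ hSclosed x
      obtain ⟨z, hz⟩ :=
        IsCompact.nonempty_iInter_of_directed_nonempty_isCompact_isClosed _ hdir htn htc htcl
      simp only [mem_iInter] at hz
      obtain ⟨s₀, hs₀⟩ := hcne
      obtain ⟨x₀, hx₀, hx₀e⟩ := hcF hs₀
      have hz₀ : z ∈ s₀ := hz ⟨s₀, hs₀⟩
      rw [hx₀e] at hz₀
      have hzSa : z ∈ S a := hStrans a x₀ z hx₀ hz₀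
      refine ⟨S z, ⟨z, hzSa, rfl⟩, ?_⟩
      intro s hs
      obtain ⟨x, hx, hxe⟩ := hcF hs
      have hzs : z ∈ s := hz ⟨s, hs⟩
      rw [hxe] at hzs ⊢
      exact fun w hw => hStrans x z w hzs hw
    obtain ⟨Tm, _, hmin⟩ := zorn_superset_nonempty F hzorn (S a) ⟨a, hSmem a ha, rfl⟩
    obtain ⟨y, hy, hye⟩ := hmin.1
    refine ⟨y, hy, ?_⟩
    ext z
    simp only [mem_singleton_iff]
    constructor
    · intro hz
      have hzSa : z ∈ S a := hStrans a y z hy hz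
      have hsub : S z ⊆ Tm := by
        rw [hye]; exact fun w hw => hStrans y z w hz hw
      have heq : S z = Tm := (hmin.eq_of_superset ⟨z, hzSa, rfl⟩ hsub).symm
      have hyz : y ∈ S z := by rw [heq, hye]; exact hSmem y (hSsubA a hy)
      have hz0 : y - z = 0 := hanti _ hz.2 (by simpa [neg_sub] using hyz.2)
      exact (sub_eq_zero.mp hz0).symm
    · intro hz
      rw [hz]
      exact hSmem y (hSsubA a hy)
  constructor
  · obtain ⟨a, ha⟩ := hA
    obtain ⟨y, hy, hye⟩ := key a ha
    exact ⟨y, hSsubA a hy, hye⟩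
  · apply Subset.antisymm
    · rintro x ⟨a, ha, k, hk, rfl⟩
      obtain ⟨y, hy, hye⟩ := key a ha
      refine ⟨y, ⟨hSsubA a hy, hye⟩, (a - y) + k, hKadd _ hy.2 _ hk, ?_⟩
      show y + (a - y + k) = a + k
      rw [← add_assoc]
      congr 1
      exact add_sub_cancel y a
    · exact add_subset_add_right (fun y hy => hy.1)
end

section
/- Let F(x) = {f^1(x),…,f^p(x)} with each f^i : R^n → R^m continuous, and let I_0(x) = {i ∈ [p] : f^i(x) ∈ WMin(F(x),K)}. Then for every x̄ there is a neighborhood U of x̄ such that I_0(x) ⊆ I_0(x̄) for all x ∈ U. -/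
open Set Pointwise Topology

/-- The set of weakly minimal elements of `A` w.r.t. the cone `K`:
`WMin(A,K) = {y ∈ A : (y - int K) ∩ A = ∅}`. -/
def WMinSet {m : ℕ} (K A : Set (EuclideanSpace ℝ (Fin m))) : Set (EuclideanSpace ℝ (Fin m)) :=
  {y | y ∈ A ∧ ∀ z ∈ A, y - z ∉ interior K}

/-- local upper containment of the weakly minimal active index mapping. -/
theorem weak_active_index_usc {n m p : ℕ} (K : Set (EuclideanSpace ℝ (Fin m)))
    (hcone : ∀ y ∈ K, ∀ t : ℝ, 0 ≤ t → t • y ∈ K)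
    (hclosed : IsClosed K) (hconv : Convex ℝ K)
    (hpointed : K ∩ (-K) = {0})
    (hsolid : (interior K).Nonempty)
    (f : Fin p → EuclideanSpace ℝ (Fin n) → EuclideanSpace ℝ (Fin m))
    (hf : ∀ i, Continuous (f i))
    (xbar : EuclideanSpace ℝ (Fin n)) :
    ∃ U ∈ 𝓝 xbar, ∀ x ∈ U,
      {i : Fin p | f i x ∈ WMinSet K (Set.range fun j => f j x)} ⊆
        {i : Fin p | f i xbar ∈ WMinSet K (Set.range fun j => f j xbar)} := by
  have h : ∀ i : Fin p, ∀ᶠ x in 𝓝 xbar,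
      f i x ∈ WMinSet K (Set.range fun j => f j x) →
        f i xbar ∈ WMinSet K (Set.range fun j => f j xbar) := by
    intro i
    by_cases hi : f i xbar ∈ WMinSet K (Set.range fun j => f j xbar)
    · exact Filter.Eventually.of_forall fun x _ => hi
    · have hmemr : f i xbar ∈ Set.range fun j => f j xbar := ⟨i, rfl⟩
      simp only [WMinSet, Set.mem_setOf_eq, not_and, not_forall] at hi
      obtain ⟨z, hz, hzint⟩ := hi hmemr
      obtain ⟨j, rfl⟩ := hz
      have hcont : Continuous fun x => f i x - f j x := (hf i).sub (hf j)
      have hU : (fun x => f i x - f j x) ⁻¹' interior K ∈ 𝓝 xbar :=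
        (isOpen_interior.preimage hcont).mem_nhds (by simpa using hzint)
      filter_upwards [hU] with x hx hmin
      exact absurd hx (hmin.2 (f j x) ⟨j, rfl⟩)
  refine ⟨{x | ∀ i : Fin p, f i x ∈ WMinSet K (Set.range fun j => f j x) →
      f i xbar ∈ WMinSet K (Set.range fun j => f j xbar)},
    Filter.eventually_all.2 h, fun x hx i hi => hx i hi⟩
end

section
/- Let F(x) = {f^1(x),…,f^p(x)} with each f^i continuous, and suppose Min(F(x̄),K) = WMin(F(x̄),K). Then there is a neighborhood U of x̄ such that I(x) ⊆ I(x̄) for all x ∈ U, where I(x) = {i ∈ [p] : f^i(x) ∈ Min(F(x),K)}. -/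
open Set Pointwise Topology

/-- The set of minimal elements of `A` w.r.t. the cone `K`:
`Min(A,K) = {y ∈ A : (y - K) ∩ A = {y}}`. -/
def MinSet {m : ℕ} (K A : Set (EuclideanSpace ℝ (Fin m))) : Set (EuclideanSpace ℝ (Fin m)) :=
  {y | y ∈ A ∧ {z | z ∈ A ∧ y - z ∈ K} = {y}}

/-- If a pointed cone has `0` in its interior, the space is trivial. -/
lemma zero_interior_degenerate {m : ℕ} (K : Set (EuclideanSpace ℝ (Fin m)))
    (hpointed : K ∩ (-K) = {0}) (h0 : (0 : EuclideanSpace ℝ (Fin m)) ∈ interior K) :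
    ∀ v : EuclideanSpace ℝ (Fin m), v = 0 := by
  intro v
  obtain ⟨ε, εpos, hball⟩ := Metric.mem_nhds_iff.mp (mem_interior_iff_mem_nhds.mp h0)
  set c : ℝ := ε / (2 * (‖v‖ + 1)) with hc
  have hnorm : (0:ℝ) < ‖v‖ + 1 := by positivity
  have hcpos : 0 < c := by positivity
  have hlt : ‖c • v‖ < ε := by
    rw [norm_smul, Real.norm_eq_abs, abs_of_pos hcpos, hc]
    rw [div_mul_eq_mul_div, div_lt_iff₀ (by positivity)]
    nlinarith [norm_nonneg v]
  have h1 : c • v ∈ K := hball (by simpa [Metric.mem_ball, dist_eq_norm] using hlt)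
  have h2 : -(c • v) ∈ K := hball (by simpa [Metric.mem_ball, dist_eq_norm] using hlt)
  have : c • v ∈ K ∩ (-K) := ⟨h1, by simpa [Set.mem_neg] using h2⟩
  rw [hpointed, Set.mem_singleton_iff, smul_eq_zero] at this
  rcases this with h | h
  · exact absurd h hcpos.ne'
  · exact h

/-- if `Min(F(x̄),K) = WMin(F(x̄),K)` then the minimal active index mapping
satisfies `I(x) ⊆ I(x̄)` in a neighborhood of `x̄`. -/
theorem active_index_usc {n m p : ℕ} (K : Set (EuclideanSpace ℝ (Fin m)))
    (hcone : ∀ y ∈ K, ∀ t : ℝ, 0 ≤ t → t • y ∈ K)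
    (hclosed : IsClosed K) (hconv : Convex ℝ K)
    (hpointed : K ∩ (-K) = {0})
    (hsolid : (interior K).Nonempty)
    (f : Fin p → EuclideanSpace ℝ (Fin n) → EuclideanSpace ℝ (Fin m))
    (hf : ∀ i, Continuous (f i))
    (xbar : EuclideanSpace ℝ (Fin n))
    (hreg : MinSet K (Set.range fun j => f j xbar) = WMinSet K (Set.range fun j => f j xbar)) :
    ∃ U ∈ 𝓝 xbar, ∀ x ∈ U,
      {i : Fin p | f i x ∈ MinSet K (Set.range fun j => f j x)} ⊆
        {i : Fin p | f i xbar ∈ MinSet K (Set.range fun j => f j xbar)} := by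
  classical
  by_cases h0 : (0 : EuclideanSpace ℝ (Fin m)) ∈ interior K
  · -- degenerate case: the space is trivial, so every point is minimal
    have hz := zero_interior_degenerate K hpointed h0
    refine ⟨Set.univ, Filter.univ_mem, fun x _ i _ => ?_⟩
    refine ⟨⟨i, rfl⟩, ?_⟩
    ext z
    constructor
    · rintro ⟨_, _⟩
      simp [hz z, hz (f i xbar)]
    · rintro rfl
      exact ⟨⟨i, rfl⟩, by rw [sub_self]; exact interior_subset h0⟩
  · -- main case
    have hchoice : ∀ i : Fin p, f i xbar ∉ MinSet K (Set.range fun j => f j xbar) →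
        ∃ j : Fin p, f i xbar - f j xbar ∈ interior K := by
      intro i hi
      rw [hreg] at hi
      simp only [WMinSet, Set.mem_setOf_eq, not_and, not_forall] at hi
      obtain ⟨z, hzA, hz⟩ := hi ⟨i, rfl⟩
      obtain ⟨j, rfl⟩ := hzA
      exact ⟨j, not_not.mp hz⟩
    set V : Fin p → Set (EuclideanSpace ℝ (Fin n)) := fun i =>
      if h : f i xbar ∈ MinSet K (Set.range fun j => f j xbar) then Set.univ
      else (fun x => f i x - f ((hchoice i h).choose) x) ⁻¹' interior K with hV
    refine ⟨⋂ i, V i, Filter.iInter_mem.mpr fun i => ?_, ?_⟩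
    · rw [hV]
      by_cases h : f i xbar ∈ MinSet K (Set.range fun j => f j xbar)
      · simp [h]
      · simp only [h, dif_neg, not_false_iff]
        exact (isOpen_interior.preimage ((hf i).sub (hf _))).mem_nhds
          (hchoice i h).choose_spec
    · intro x hx i hi
      by_contra h
      have h' : f i xbar ∉ MinSet K (Set.range fun j => f j xbar) := h
      have hxV : x ∈ V i := Set.mem_iInter.mp hx i
      simp only [hV, dif_neg h', Set.mem_preimage] at hxV
      have hxV : f i x - f ((hchoice i h').choose) x ∈ interior K := hxV
      -- hxV : f i x - f j x ∈ interior K where j is the chosen index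
      have hmem : f ((hchoice i h').choose) x ∈
          {z | z ∈ (Set.range fun j => f j x) ∧ f i x - z ∈ K} :=
        ⟨⟨_, rfl⟩, interior_subset hxV⟩
      rw [hi.2, Set.mem_singleton_iff] at hmem
      rw [hmem, sub_self] at hxV
      exact h0 hxV
end

section
/- Let F(x) = {f^1(x),…,f^p(x)} with f^i continuous and, for v ∈ R^m, I_v(x̄) = {i : f^i(x̄) ∈ Min(F(x̄),K), f^i(x̄) = v}. Then for every v ∈ Min(F(x̄),K) there is a neighborhood U of x̄ such that for all x ∈ U, Min({f^i(x)}_{i ∈ I_v(x̄)}, K) ⊆ Min(F(x),K). -/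
open Set Pointwise Topology

/-- for every `v ∈ Min(F(x̄),K)` there is a neighborhood `U` of `x̄` such that
for all `x ∈ U`, `Min({f^i(x)}_{i ∈ I_v(x̄)},K) ⊆ Min(F(x),K)`, where
`I_v(x̄) = {i : f^i(x̄) ∈ Min(F(x̄),K) ∧ f^i(x̄) = v}`. -/
theorem minimal_selection_stability {n m p : ℕ} (K : Set (EuclideanSpace ℝ (Fin m)))
    (hcone : ∀ y ∈ K, ∀ t : ℝ, 0 ≤ t → t • y ∈ K)
    (hclosed : IsClosed K) (hconv : Convex ℝ K)
    (hpointed : K ∩ (-K) = {0})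
    (hsolid : (interior K).Nonempty)
    (f : Fin p → EuclideanSpace ℝ (Fin n) → EuclideanSpace ℝ (Fin m))
    (hf : ∀ i, Continuous (f i))
    (xbar : EuclideanSpace ℝ (Fin n)) :
    ∀ v ∈ MinSet K (Set.range fun j => f j xbar),
      ∃ U ∈ 𝓝 xbar, ∀ x ∈ U,
        MinSet K ((fun i => f i x) ''
            {i : Fin p | f i xbar ∈ MinSet K (Set.range fun j => f j xbar) ∧ f i xbar = v}) ⊆
          MinSet K (Set.range fun j => f j x) := by
  intro v hv
  obtain ⟨hvmem, hveq⟩ := hv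
  obtain ⟨w, hw⟩ := hsolid
  have h0K : (0 : EuclideanSpace ℝ (Fin m)) ∈ K := by
    simpa using hcone w (interior_subset hw) 0 le_rfl
  set I : Set (Fin p) :=
    {i | f i xbar ∈ MinSet K (Set.range fun j => f j xbar) ∧ f i xbar = v} with hIdef
  have key : ∀ j, j ∉ I → v - f j xbar ∉ K := by
    intro j hj hK
    apply hj
    have hz : f j xbar ∈ {z | z ∈ (Set.range fun j => f j xbar) ∧ v - z ∈ K} :=
      ⟨⟨j, rfl⟩, hK⟩
    rw [hveq] at hz
    have hzv : f j xbar = v := hz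
    exact ⟨hzv ▸ (⟨hvmem, hveq⟩ : v ∈ MinSet K (Set.range fun j => f j xbar)), hzv⟩
  refine ⟨⋂ i : Fin p, ⋂ j : Fin p, {x | i ∈ I → j ∉ I → f i x - f j x ∉ K}, ?_, ?_⟩
  · refine Filter.iInter_mem.2 fun i => Filter.iInter_mem.2 fun j => ?_
    by_cases hi : i ∈ I
    · by_cases hj : j ∈ I
      · exact Filter.mem_of_superset Filter.univ_mem (fun x _ _ hj' => absurd hj hj')
      · have hopen : IsOpen {x | f i x - f j x ∉ K} :=
          hclosed.isOpen_compl.preimage ((hf i).sub (hf j))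
        have hmem : xbar ∈ {x | f i x - f j x ∉ K} := by
          show f i xbar - f j xbar ∉ K
          rw [hi.2]
          exact key j hj
        exact Filter.mem_of_superset (hopen.mem_nhds hmem) (fun x hx _ _ => hx)
    · exact Filter.mem_of_superset Filter.univ_mem (fun x _ hi' => absurd hi' hi)
  · intro x hx y hy
    obtain ⟨hyimg, hyeq⟩ := hy
    obtain ⟨i0, hi0, hy0⟩ := hyimg
    constructor
    · exact ⟨i0, hy0⟩
    · ext z
      simp only [Set.mem_setOf_eq, Set.mem_singleton_iff]
      constructor
      · rintro ⟨⟨j, rfl⟩, hzK⟩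
        by_cases hj : j ∈ I
        · have : f j x ∈ {z | z ∈ ((fun i => f i x) '' I) ∧ y - z ∈ K} :=
            ⟨⟨j, hj, rfl⟩, hzK⟩
          rw [hyeq] at this
          exact this
        · exfalso
          have hxij : f i0 x - f j x ∉ K := by
            have := Set.mem_iInter.1 (Set.mem_iInter.1 hx i0) j
            exact this hi0 hj
          exact hxij (by rw [show f i0 x = y from hy0]; exact hzK)
      · rintro rfl
        refine ⟨⟨i0, hy0⟩, ?_⟩
        simpa using h0K
end

section
/- Let ω(x) = |Min(F(x),K)| where F(x) = {f^1(x),…,f^p(x)} with each f^i continuous. Then ω is lower semicontinuous, i.e., for every x̄ there is a neighborhood U of x̄ with ω(x) ≥ ω(x̄) for all x ∈ U. -/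
open Set Pointwise Topology

/-- the number of minimal elements `ω(x) = |Min(F(x),K)|` is lower
semicontinuous: around every `x̄` there is a neighborhood on which `ω(x) ≥ ω(x̄)`. -/
theorem card_min_lsc {n m p : ℕ} (K : Set (EuclideanSpace ℝ (Fin m)))
    (hcone : ∀ y ∈ K, ∀ t : ℝ, 0 ≤ t → t • y ∈ K)
    (hclosed : IsClosed K) (hconv : Convex ℝ K)
    (hpointed : K ∩ (-K) = {0})
    (hsolid : (interior K).Nonempty)
    (f : Fin p → EuclideanSpace ℝ (Fin n) → EuclideanSpace ℝ (Fin m))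
    (hf : ∀ i, Continuous (f i))
    (xbar : EuclideanSpace ℝ (Fin n)) :
    ∃ U ∈ 𝓝 xbar, ∀ x ∈ U,
      (MinSet K (Set.range fun j => f j xbar)).ncard ≤
        (MinSet K (Set.range fun j => f j x)).ncard := by
  classical
  -- basic cone facts
  obtain ⟨y0, hy0⟩ := hsolid
  have hK0 : (0 : EuclideanSpace ℝ (Fin m)) ∈ K := by
    have := hcone y0 (interior_subset hy0) 0 le_rfl
    simpa using this
  have hadd : ∀ y z : EuclideanSpace ℝ (Fin m), y ∈ K → z ∈ K → y + z ∈ K := by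
    intro y z hy hz
    have h1 : (1/2:ℝ) • y + (1/2:ℝ) • z ∈ K :=
      hconv hy hz (by norm_num) (by norm_num) (by norm_num)
    have h2 := hcone _ h1 2 (by norm_num)
    have h3 : (2:ℝ) • ((1/2:ℝ) • y + (1/2:ℝ) • z) = y + z := by
      rw [smul_add, smul_smul, smul_smul]; norm_num
    rwa [h3] at h2
  have hpoint : ∀ y : EuclideanSpace ℝ (Fin m), y ∈ K → -y ∈ K → y = 0 := by
    intro y hy hny
    have hmem : y ∈ K ∩ (-K) := ⟨hy, by simpa [Set.mem_neg] using hny⟩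
    rw [hpointed] at hmem
    simpa using hmem
  -- key lemma: every element of a finite set lies above a minimal element
  have key : ∀ (A : Set (EuclideanSpace ℝ (Fin m))), A.Finite →
      ∀ (N : ℕ), ∀ a, a ∈ A → ({z | z ∈ A ∧ a - z ∈ K}).ncard ≤ N →
      ∃ z ∈ MinSet K A, a - z ∈ K := by
    intro A hA N
    induction N with
    | zero =>
      intro a ha hcard
      exfalso
      have hmem : a ∈ {z | z ∈ A ∧ a - z ∈ K} := ⟨ha, by simpa using hK0⟩
      have hfin : ({z | z ∈ A ∧ a - z ∈ K}).Finite := hA.subset (fun z hz => hz.1)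
      have hpos := (Set.ncard_pos hfin).mpr ⟨a, hmem⟩
      omega
    | succ N ih =>
      intro a ha hcard
      by_cases hmin : {z | z ∈ A ∧ a - z ∈ K} = {a}
      · exact ⟨a, ⟨ha, hmin⟩, by simpa using hK0⟩
      · have hmem : a ∈ {z | z ∈ A ∧ a - z ∈ K} := ⟨ha, by simpa using hK0⟩
        have hss : {a} ⊆ {z | z ∈ A ∧ a - z ∈ K} := by
          intro w hw; rw [Set.mem_singleton_iff] at hw; subst hw; exact hmem
        obtain ⟨b, hb, hba⟩ : ∃ b ∈ {z | z ∈ A ∧ a - z ∈ K}, b ≠ a := by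
          by_contra h
          push_neg at h
          exact hmin (Set.Subset.antisymm (fun w hw => h w hw) hss)
        have hsub : {z | z ∈ A ∧ b - z ∈ K} ⊆ {z | z ∈ A ∧ a - z ∈ K} := by
          intro z hz
          refine ⟨hz.1, ?_⟩
          have := hadd _ _ hb.2 hz.2
          simpa [sub_add_sub_cancel] using this
        have hnot : a ∉ {z | z ∈ A ∧ b - z ∈ K} := by
          intro hc
          apply hba
          have h0 : a - b = 0 := hpoint (a - b) hb.2 (by simpa [neg_sub] using hc.2)
          exact (sub_eq_zero.mp h0).symm
        have hstrict : {z | z ∈ A ∧ b - z ∈ K} ⊂ {z | z ∈ A ∧ a - z ∈ K} :=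
          ⟨hsub, fun h => hnot (h hmem)⟩
        have hlt := Set.ncard_lt_ncard hstrict (hA.subset fun z hz => hz.1)
        obtain ⟨z, hz, hbz⟩ := ih b hb.1 (by omega)
        exact ⟨z, hz, by simpa [sub_add_sub_cancel] using hadd _ _ hb.2 hbz⟩
  set M := MinSet K (Set.range fun j => f j xbar) with hMdef
  -- the neighborhood
  let C : Fin p → Fin p → Fin p → Set (EuclideanSpace ℝ (Fin n)) := fun j i₁ i₂ =>
    {x | (f i₁ xbar ∈ M ∧ f i₂ xbar ∈ M ∧ f i₁ xbar ≠ f i₂ xbar) →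
         ¬(f i₁ x - f j x ∈ K ∧ f i₂ x - f j x ∈ K)}
  refine ⟨⋂ j, ⋂ i₁, ⋂ i₂, C j i₁ i₂, ?_, ?_⟩
  · apply IsOpen.mem_nhds
    · apply isOpen_iInter_of_finite; intro j
      apply isOpen_iInter_of_finite; intro i₁
      apply isOpen_iInter_of_finite; intro i₂
      by_cases hc : f i₁ xbar ∈ M ∧ f i₂ xbar ∈ M ∧ f i₁ xbar ≠ f i₂ xbar
      · have hCeq : C j i₁ i₂ =
            ((fun x => f i₁ x - f j x) ⁻¹' K ∩ (fun x => f i₂ x - f j x) ⁻¹' K)ᶜ := by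
          ext x; simp [C, hc]
        rw [hCeq]
        exact (IsClosed.inter (hclosed.preimage ((hf i₁).sub (hf j)))
          (hclosed.preimage ((hf i₂).sub (hf j)))).isOpen_compl
      · have hCeq : C j i₁ i₂ = Set.univ := by
          ext x; simp only [C, Set.mem_setOf_eq, Set.mem_univ, iff_true]
          intro h; exact absurd h hc
        rw [hCeq]; exact isOpen_univ
    · simp only [Set.mem_iInter]
      intro j i₁ i₂ ⟨h1, h2, hne⟩ ⟨hk1, hk2⟩
      apply hne
      have e1 : f j xbar ∈ {z | z ∈ (Set.range fun j => f j xbar) ∧ f i₁ xbar - z ∈ K} :=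
        ⟨⟨j, rfl⟩, hk1⟩
      have e2 : f j xbar ∈ {z | z ∈ (Set.range fun j => f j xbar) ∧ f i₂ xbar - z ∈ K} :=
        ⟨⟨j, rfl⟩, hk2⟩
      rw [h1.2] at e1
      rw [h2.2] at e2
      rw [← e1, ← e2]
  · intro x hx
    set A := Set.range fun j => f j x with hAdef
    have hAfin : A.Finite := Set.finite_range _
    have exmin : ∀ i : Fin p, ∃ z ∈ MinSet K A, f i x - z ∈ K := fun i =>
      key A hAfin A.ncard (f i x) ⟨i, rfl⟩
        (Set.ncard_le_ncard (fun z hz => hz.1) hAfin)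
    let g : EuclideanSpace ℝ (Fin m) → EuclideanSpace ℝ (Fin m) := fun y =>
      if h : ∃ i : Fin p, f i xbar = y then (exmin h.choose).choose else y
    have hgspec : ∀ y (h : ∃ i : Fin p, f i xbar = y),
        g y ∈ MinSet K A ∧ f h.choose x - g y ∈ K := by
      intro y h
      have : g y = (exmin h.choose).choose := dif_pos h
      rw [this]
      obtain ⟨hz1, hz2⟩ := (exmin h.choose).choose_spec
      exact ⟨hz1, hz2⟩
    have hmaps : ∀ y ∈ M, g y ∈ MinSet K A := by
      intro y hy
      exact (hgspec y hy.1).1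
    have hinj : Set.InjOn g M := by
      intro y₁ hy₁ y₂ hy₂ hgeq
      by_contra hne
      have h₁ : ∃ i : Fin p, f i xbar = y₁ := hy₁.1
      have h₂ : ∃ i : Fin p, f i xbar = y₂ := hy₂.1
      obtain ⟨hg1min, hg1k⟩ := hgspec y₁ h₁
      obtain ⟨hg2min, hg2k⟩ := hgspec y₂ h₂
      obtain ⟨j, hj⟩ : g y₁ ∈ A := hg1min.1
      have hUx := Set.mem_iInter.mp (Set.mem_iInter.mp
        (Set.mem_iInter.mp hx j) h₁.choose) h₂.choose
      apply hUx
      · refine ⟨?_, ?_, ?_⟩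
        · rw [h₁.choose_spec]; exact hy₁
        · rw [h₂.choose_spec]; exact hy₂
        · rw [h₁.choose_spec, h₂.choose_spec]; exact hne
      · constructor
        · rw [show f j x = g y₁ from hj]; exact hg1k
        · rw [show f j x = g y₁ from hj, hgeq]; exact hg2k
    have hMfin : (MinSet K A).Finite := hAfin.subset (fun z hz => hz.1)
    exact Set.ncard_le_ncard_of_injOn g hmaps hinj hMfin
end

section
/- Given matrices A_1,…,A_ω ∈ R^{m×n} (the Jacobians ∇f^{a_j}(x̄)^⊤), the following are equivalent: (1) there exist μ_1,…,μ_ω ∈ K*, not all zero, with ∑_j A_j^⊤ μ_j = 0; (2) for every u ∈ R^n there exists j ∈ [ω] with A_j u ∉ −int K. -/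
open Set Pointwise Topology Matrix

private lemma dot_rep {m : ℕ} (g : (Fin m → ℝ) →ₗ[ℝ] ℝ) (x : Fin m → ℝ) :
    g x = (fun i => g (Pi.single i 1)) ⬝ᵥ x := by
  have hx : x = ∑ i, x i • (Pi.single i 1 : Fin m → ℝ) := by
    funext k
    simp [Pi.single_apply, Finset.sum_apply]
  calc g x = g (∑ i, x i • (Pi.single i 1 : Fin m → ℝ)) := by rw [← hx]
    _ = ∑ i, x i * g (Pi.single i 1) := by
        rw [map_sum]; exact Finset.sum_congr rfl fun i _ => by rw [g.map_smul, smul_eq_mul]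
    _ = _ := by
        simp only [dotProduct]
        exact Finset.sum_congr rfl fun i _ => mul_comm _ _

private lemma dot_self_pos {m : ℕ} {v : Fin m → ℝ} (hv : v ≠ 0) : 0 < v ⬝ᵥ v := by
  have h0 : 0 ≤ v ⬝ᵥ v := Finset.sum_nonneg fun i _ => mul_self_nonneg _
  rcases h0.lt_or_eq with h | h
  · exact h
  · exact absurd (dotProduct_self_eq_zero.mp h.symm) hv

private lemma dual_pos {m : ℕ} {K : Set (Fin m → ℝ)} {v z : Fin m → ℝ}
    (hv : ∀ y ∈ K, 0 ≤ v ⬝ᵥ y) (hvne : v ≠ 0) (hz : z ∈ interior K) : 0 < v ⬝ᵥ z := by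
  obtain ⟨ε, hε, hball⟩ := Metric.mem_nhds_iff.mp (mem_interior_iff_mem_nhds.mp hz)
  have hnv : 0 < ‖v‖ := norm_pos_iff.mpr hvne
  set δ : ℝ := ε / (2 * ‖v‖) with hδ
  have hδpos : 0 < δ := by positivity
  have hmem : z - δ • v ∈ K := by
    apply hball
    rw [Metric.mem_ball, dist_eq_norm]
    have h1 : z - δ • v - z = -(δ • v) := by abel
    rw [h1, norm_neg, norm_smul, Real.norm_eq_abs, abs_of_pos hδpos]
    have h2 : δ * ‖v‖ = ε / 2 := by rw [hδ]; field_simp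
    rw [h2]; linarith
  have := hv _ hmem
  rw [dotProduct_sub, dotProduct_smul, smul_eq_mul] at this
  nlinarith [dot_self_pos hvne]

/-- given matrices `A_1,…,A_ω ∈ ℝ^{m×n}`, the existence of multipliers
`μ_j ∈ K*`, not all zero, with `∑ j, A_jᵀ μ_j = 0` is equivalent to: for every `u ∈ ℝ^n`
there exists `j` with `A_j u ∉ -int K`. -/
theorem stationarity_characterization {n m : ℕ} (K : Set (Fin m → ℝ))
    (hcone : ∀ y ∈ K, ∀ t : ℝ, 0 ≤ t → t • y ∈ K)
    (hclosed : IsClosed K) (hconv : Convex ℝ K)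
    (hpointed : K ∩ (-K) = {0})
    (hsolid : (interior K).Nonempty)
    (ω : ℕ) (A : Fin ω → Matrix (Fin m) (Fin n) ℝ) :
    (∃ μ : Fin ω → (Fin m → ℝ),
        (∀ j, μ j ∈ {v : Fin m → ℝ | ∀ y ∈ K, 0 ≤ v ⬝ᵥ y}) ∧ μ ≠ 0 ∧
          (∑ j : Fin ω, (A j)ᵀ *ᵥ μ j) = 0) ↔
      (∀ u : Fin n → ℝ, ∃ j : Fin ω, (A j) *ᵥ u ∉ -(interior K)) := by
  constructor
  · rintro ⟨μ, hμK, hμne, hsum⟩ u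
    by_contra hcon
    push_neg at hcon
    have hz : ∀ j, -((A j) *ᵥ u) ∈ interior K := fun j => Set.mem_neg.mp (hcon j)
    obtain ⟨j₀, hj₀⟩ := Function.ne_iff.mp hμne
    have hterm : ∀ j, 0 ≤ μ j ⬝ᵥ -((A j) *ᵥ u) := fun j =>
      hμK j _ (interior_subset (hz j))
    have hpos : 0 < μ j₀ ⬝ᵥ -((A j₀) *ᵥ u) := dual_pos (hμK j₀) hj₀ (hz j₀)
    have hsumpos : 0 < ∑ j, μ j ⬝ᵥ -((A j) *ᵥ u) :=
      Finset.sum_pos' (fun j _ => hterm j) ⟨j₀, Finset.mem_univ _, hpos⟩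
    have hzero : ∑ j, μ j ⬝ᵥ ((A j) *ᵥ u) = 0 := by
      have : ∀ j, μ j ⬝ᵥ ((A j) *ᵥ u) = ((A j)ᵀ *ᵥ μ j) ⬝ᵥ u := fun j => by
        rw [Matrix.mulVec_transpose, Matrix.dotProduct_mulVec]
      simp_rw [this]
      rw [show ∑ j, ((A j)ᵀ *ᵥ μ j) ⬝ᵥ u = (∑ j, (A j)ᵀ *ᵥ μ j) ⬝ᵥ u by
        simp [dotProduct, Finset.sum_apply, Finset.sum_mul]; exact Finset.sum_comm, hsum,
        zero_dotProduct]
    simp only [dotProduct_neg] at hsumpos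
    rw [Finset.sum_neg_distrib] at hsumpos
    linarith [hzero, hsumpos]
  · intro hRHS
    obtain ⟨e, he⟩ := hsolid
    set T : Set (Fin ω → Fin m → ℝ) := Set.univ.pi (fun _ => -(interior K)) with hTdef
    set L : (Fin n → ℝ) →ₗ[ℝ] (Fin ω → Fin m → ℝ) :=
      LinearMap.pi (fun j => (A j).mulVecLin) with hLdef
    have hLapp : ∀ u j, L u j = (A j) *ᵥ u := fun u j => rfl
    have hTopen : IsOpen T := isOpen_set_pi Set.finite_univ (fun j _ => isOpen_interior.neg)
    have hTconv : Convex ℝ T := convex_pi (fun j _ => (hconv.interior).neg)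
    have hSconv : Convex ℝ (Set.range L) := by
      rw [← LinearMap.coe_range]
      exact (LinearMap.range L).convex
    have hdisj : Disjoint T (Set.range L) := by
      rw [Set.disjoint_right]
      rintro x ⟨u, rfl⟩ hxT
      obtain ⟨j, hj⟩ := hRHS u
      exact hj (hxT j (Set.mem_univ j))
    obtain ⟨f, c, hfT, hfS⟩ := geometric_hahn_banach_open hTconv hTopen hSconv hdisj
    -- f vanishes on the range of L
    have hf0 : ∀ u, f (L u) = 0 := by
      intro u
      by_contra ha
      have h1 : c ≤ f (L (((c - 1) / f (L u)) • u)) := hfS _ ⟨_, rfl⟩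
      rw [L.map_smul, f.map_smul, smul_eq_mul, div_mul_cancel₀ _ ha] at h1
      linarith
    have hc0 : c ≤ 0 := by
      have := hfS 0 ⟨0, map_zero L⟩
      rwa [map_zero] at this
    set μ : Fin ω → Fin m → ℝ := fun j i => f (Pi.single j (Pi.single i 1)) with hμdef
    have hrep : ∀ y : Fin ω → Fin m → ℝ, f y = ∑ j, μ j ⬝ᵥ y j := by
      intro y
      have hy : y = ∑ j, Pi.single j (y j) := (Finset.univ_sum_single y).symm
      conv_lhs => rw [hy]
      rw [map_sum]
      refine Finset.sum_congr rfl fun j _ => ?_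
      exact dot_rep ((f : (Fin ω → Fin m → ℝ) →ₗ[ℝ] ℝ).comp
        (LinearMap.single ℝ (fun _ : Fin ω => Fin m → ℝ) j)) (y j)
    have hpos : ∀ z : Fin ω → Fin m → ℝ, (∀ j, z j ∈ interior K) →
        0 < ∑ j, μ j ⬝ᵥ z j := by
      intro z hzmem
      have hmemT : (fun j => -(z j)) ∈ T := fun j _ => by
        simpa [Set.mem_neg] using hzmem j
      have := hfT _ hmemT
      rw [hrep] at this
      simp only [dotProduct_neg] at this
      rw [Finset.sum_neg_distrib] at this
      linarith
    refine ⟨μ, ?_, ?_, ?_⟩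
    · intro j y hy
      by_contra hneg
      push_neg at hneg
      set a : ℝ := μ j ⬝ᵥ y with hadef
      have hgen : ∀ s : ℝ, 0 ≤ s →
          0 < μ j ⬝ᵥ ((1/2 : ℝ) • (s • y) + (1/2 : ℝ) • e) +
            ∑ i ∈ Finset.univ.erase j, μ i ⬝ᵥ e := by
        intro s hs
        have hmemj : (1/2 : ℝ) • (s • y) + (1/2 : ℝ) • e ∈ interior K :=
          hconv.combo_self_interior_mem_interior (hcone y hy s hs) he
            (by norm_num) (by norm_num) (by norm_num)
        have hkey := hpos (Function.update (fun _ => e) j ((1/2 : ℝ) • (s • y) + (1/2 : ℝ) • e))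
          (fun i => by
            rcases eq_or_ne i j with rfl | hij
            · simpa using hmemj
            · simpa [Function.update_of_ne hij] using he)
        rw [Finset.sum_eq_sum_sdiff_singleton_add (Finset.mem_univ j)] at hkey
        rw [Function.update_self] at hkey
        have hrest : ∑ i ∈ Finset.univ \ {j},
            μ i ⬝ᵥ (Function.update (fun _ => e) j ((1/2 : ℝ) • (s • y) + (1/2 : ℝ) • e)) i =
            ∑ i ∈ Finset.univ.erase j, μ i ⬝ᵥ e := by
          rw [Finset.sdiff_singleton_eq_erase]
          refine Finset.sum_congr rfl fun i hi => ?_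
          rw [Function.update_of_ne (Finset.ne_of_mem_erase hi)]
        rw [hrest] at hkey
        linarith
      set B : ℝ := (1/2 : ℝ) * (μ j ⬝ᵥ e) + ∑ i ∈ Finset.univ.erase j, μ i ⬝ᵥ e with hBdef
      have hexp : ∀ s : ℝ, μ j ⬝ᵥ ((1/2 : ℝ) • (s • y) + (1/2 : ℝ) • e) +
          ∑ i ∈ Finset.univ.erase j, μ i ⬝ᵥ e = s / 2 * a + B := by
        intro s
        simp only [dotProduct_add, dotProduct_smul, smul_eq_mul, hBdef, hadef]
        ring
      have hB : 0 < B := by have := hgen 0 le_rfl; rw [hexp] at this; simpa using this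
      have hs₀ : (0:ℝ) ≤ 2 * B / (-a) := div_nonneg (by linarith) (by linarith)
      have := hgen _ hs₀
      rw [hexp] at this
      have ha' : a ≠ 0 := ne_of_lt hneg
      have : (2 * B / (-a)) / 2 * a + B = 0 := by field_simp; ring
      linarith [hgen _ hs₀, (hexp (2 * B / (-a))).symm]
    · intro h0
      have := hpos (fun _ => e) (fun _ => he)
      rw [h0] at this
      simp at this
    · have hdot : ∀ u, (∑ j, (A j)ᵀ *ᵥ μ j) ⬝ᵥ u = 0 := by
        intro u
        have h1 := hf0 u
        rw [hrep] at h1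
        have : ∀ j, μ j ⬝ᵥ (L u j) = ((A j)ᵀ *ᵥ μ j) ⬝ᵥ u := fun j => by
          rw [hLapp, Matrix.mulVec_transpose, Matrix.dotProduct_mulVec]
        simp_rw [this] at h1
        rw [show (∑ j, (A j)ᵀ *ᵥ μ j) ⬝ᵥ u = ∑ j, ((A j)ᵀ *ᵥ μ j) ⬝ᵥ u by
          simp [dotProduct, Finset.sum_apply, Finset.sum_mul]; exact Finset.sum_comm]
        exact h1
      have := hdot (∑ j, (A j)ᵀ *ᵥ μ j)
      exact dotProduct_self_eq_zero.mp this
end
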